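/- Arbitrage characterization of null sets: A set A ⊆ Ω^qv is a null set (i.e. P̄(A) = 0) if and only if there exists a sequence of 1-admissible simple strategies (Hⁿ) ⊆ H₁ such that 1 + liminf_{t→∞} liminf_{n→∞}(Hⁿ·B)_t(ω) ≥ ∞·1_A(ω) for all ω ∈ Ω^qv, with the conventions ∞·0 := 0 and ∞·1 := ∞ (i.e. the liminf is nonnegative minus one everywhere and equals +∞ for every ω ∈ A). -/

import Mathlib

open MeasureTheory ProbabilityTheory Filter Topology Set
open scoped ENNReal NNReal Classical

noncomputable section

/-- The space of continuous paths on `[0,∞)` started at `0`, modeled as continuous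
functions on `ℝ` which vanish on `(-∞,0]`, endowed with the topology of locally
uniform convergence and its Borel σ-algebra. -/
def PathSpace : Type := {ω : ℝ → ℝ // Continuous ω ∧ ∀ t ≤ 0, ω t = 0}

instance : TopologicalSpace PathSpace :=
  TopologicalSpace.induced (fun ω : PathSpace => (⟨ω.1, ω.2.1⟩ : C(ℝ, ℝ))) inferInstance

instance : MeasurableSpace PathSpace := borel PathSpace
instance : BorelSpace PathSpace := ⟨rfl⟩

namespace RF

/-- The coordinate (canonical) process. -/
def eval (t : ℝ) (ω : PathSpace) : ℝ := ω.1 t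

/-- The natural (raw) filtration generated by the coordinate process. -/
def natFilt (t : ℝ) : MeasurableSpace PathSpace :=
  ⨆ (s : ℝ) (_ : s ≤ t), MeasurableSpace.comap (eval s) inferInstance

/-- The path `ω` stopped at time `t`. -/
def stoppedPath (ω : PathSpace) (t : ℝ) : PathSpace :=
  ⟨fun s => ω.1 (min s t), ω.2.1.comp (continuous_id.min continuous_const),
    fun s hs => ω.2.2 _ (le_trans (min_le_left _ _) hs)⟩

/-- Concatenation: follow `ω` up to time `t`, then continue with the increments of `ω'`. -/
def concat (ω : PathSpace) (t : ℝ) (ω' : PathSpace) : PathSpace :=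
  ⟨fun r => if r ≤ max t 0 then ω.1 r else ω.1 (max t 0) + ω'.1 (r - max t 0), by
    constructor
    · refine Continuous.if_le ω.2.1 ?_ continuous_id continuous_const ?_
      · exact continuous_const.add (ω'.2.1.comp (continuous_id.sub continuous_const))
      · intro x hx; rw [hx, sub_self, ω'.2.2 0 le_rfl, add_zero]
    · intro r hr
      have h1 : r ≤ max t 0 := le_trans hr (le_max_right t 0)
      simp only [h1, if_true]
      exact ω.2.2 r hr⟩

/-- The "concatenation version" of the conditional expectation
`E_W[X | F_t](ω) = ∫ X((ω↾[0,t]) ⊕ ω') W(dω')`. -/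
def condExpW (W : Measure PathSpace) (X : PathSpace → ℝ) (t : ℝ) (ω : PathSpace) : ℝ :=
  ∫ ω', X (concat ω t ω') ∂W

/-- `W` is the Wiener measure: a probability measure under which the coordinate process
has independent centered Gaussian increments. -/
def IsWienerMeasure (W : Measure PathSpace) : Prop :=
  IsProbabilityMeasure W ∧
  (∀ s t : ℝ, 0 ≤ s → s ≤ t →
    Measure.map (fun ω => eval t ω - eval s ω) W = gaussianReal 0 ((t - s).toNNReal)) ∧
  (∀ (n : ℕ) (ts : ℕ → ℝ), (∀ i, 0 ≤ ts i) → Monotone ts →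
    iIndepFun
      (fun i : Fin n => fun ω => eval (ts (i.1 + 1)) ω - eval (ts i.1) ω) W)

/-- A simple trading strategy on the (infinite horizon) path space: a sequence of
strictly increasing stopping times `τ 0 = 0 < τ 1 < ⋯ → ∞` of the natural filtration
together with bounded position functions `F n` which depend on the path stopped at `τ n`. -/
structure SimpleStrategy where
  τ : ℕ → PathSpace → ℝ
  F : ℕ → PathSpace → ℝ
  tau_zero : ∀ ω, τ 0 ω = 0
  tau_lt : ∀ n ω, τ n ω < τ (n + 1) ω
  tau_tendsto : ∀ ω, Tendsto (fun n => τ n ω) atTop atTop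
  tau_stopping : ∀ n t, MeasurableSet[natFilt t] {ω | τ n ω ≤ t}
  F_meas : ∀ n, @Measurable _ _
    (MeasurableSpace.comap (fun ω => stoppedPath ω (τ n ω)) inferInstance) _ (F n)
  F_bdd : ∀ n, ∃ C, ∀ ω, |F n ω| ≤ C

/-- The capital process `(H ⬝ B)_t` of a simple strategy. -/
def capital (H : SimpleStrategy) (t : ℝ) (ω : PathSpace) : ℝ :=
  ∑' n, H.F n ω * (ω.1 (min (H.τ (n + 1) ω) t) - ω.1 (min (H.τ n ω) t))

/-- A simple trading strategy on the finite horizon `[0,T]`: the stopping times increase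
to the terminal time `T`. -/
structure SimpleStrategyOn (T : ℝ) where
  τ : ℕ → PathSpace → ℝ
  F : ℕ → PathSpace → ℝ
  tau_zero : ∀ ω, τ 0 ω = 0
  tau_lt : ∀ n ω, τ n ω < τ (n + 1) ω
  tau_tendsto : ∀ ω, Tendsto (fun n => τ n ω) atTop (𝓝 T)
  tau_stopping : ∀ n t, MeasurableSet[natFilt t] {ω | τ n ω ≤ t}
  F_meas : ∀ n, @Measurable _ _
    (MeasurableSpace.comap (fun ω => stoppedPath ω (τ n ω)) inferInstance) _ (F n)
  F_bdd : ∀ n, ∃ C, ∀ ω, |F n ω| ≤ C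

/-- The capital process of a finite-horizon simple strategy. -/
def capitalOn {T : ℝ} (H : SimpleStrategyOn T) (t : ℝ) (ω : PathSpace) : ℝ :=
  ∑' n, H.F n ω * (ω.1 (min (H.τ (n + 1) ω) t) - ω.1 (min (H.τ n ω) t))

/-- `x` lies on the dyadic grid `2^{-n} ℤ`. -/
def inDyadic (n : ℕ) (x : ℝ) : Prop := ∃ z : ℤ, x = (z : ℝ) * (2 : ℝ) ^ (-(n : ℤ))

/-- The stopping times `σ^n_k` of successive moves of `ω` across the dyadic grid `2^{-n}ℤ`
(with values in `[0,∞]`). -/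
def sigmaTimes (ω : ℝ → ℝ) (n : ℕ) : ℕ → ℝ≥0∞
  | 0 => 0
  | k + 1 =>
    sInf (ENNReal.ofReal '' {u : ℝ | 0 ≤ u ∧ sigmaTimes ω n k ≤ ENNReal.ofReal u ∧
      inDyadic n (ω u) ∧ ω u ≠ ω (sigmaTimes ω n k).toReal})

/-- The discrete quadratic variation `V^n_t(ω)` along the dyadic stopping times. -/
def discreteQV (ω : ℝ → ℝ) (n : ℕ) (t : ℝ) : ℝ :=
  ∑' k : ℕ, (ω (min (sigmaTimes ω n (k + 1)) (ENNReal.ofReal t)).toReal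
      - ω (min (sigmaTimes ω n k) (ENNReal.ofReal t)).toReal) ^ 2

/-- `f` and `g` have the same intervals of constancy (on `[0,∞)`). -/
def SameConstancy (f g : ℝ → ℝ) : Prop :=
  ∀ u v : ℝ, 0 ≤ u → u ≤ v →
    ((∀ x ∈ Icc u v, f x = f u) ↔ ∀ x ∈ Icc u v, g x = g u)

/-- `A` is the quadratic variation of `ω`: the discrete quadratic variations converge
locally uniformly to the continuous function `A`, which has the same intervals of
constancy as `ω`; moreover either `ω` converges at `∞` or `A` is unbounded. -/
def IsQVLimit (ω : ℝ → ℝ) (A : ℝ → ℝ) : Prop :=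
  Continuous A ∧ TendstoLocallyUniformly (fun n => discreteQV ω n) A atTop ∧
  SameConstancy A ω ∧
  ((∃ L, Tendsto ω atTop (𝓝 L)) ∨ ¬ BddAbove (A '' Ici 0))

/-- `ω` admits a quadratic variation in the sense of Vovk. -/
def IsQVPath (ω : PathSpace) : Prop := ∃ A, IsQVLimit ω.1 A

/-- `Ω^qv`, the set of paths admitting a quadratic variation. -/
def OmegaQV : Set PathSpace := {ω | IsQVPath ω}

/-- The quadratic variation `⟨ω⟩` of a path (junk value `0` off `Ω^qv`). -/
def qvOf (ω : PathSpace) : ℝ → ℝ :=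
  if h : IsQVPath ω then h.choose else fun _ => 0

/-- `⟨ω⟩` as a Stieltjes function (junk value off the set where `⟨ω⟩` is monotone
and continuous). -/
def qvStieltjes (ω : PathSpace) : StieltjesFunction ℝ :=
  if h : Monotone (qvOf ω) ∧ Continuous (qvOf ω) then
    { toFun := qvOf ω
      mono' := h.1
      right_continuous' := fun _ => h.2.continuousAt.continuousWithinAt }
  else
    { toFun := fun _ => 0
      mono' := monotone_const
      right_continuous' := fun _ => continuousWithinAt_const }

/-- `ζ^f_t(ω) = (1/2) ∫_0^t f''(ω_s) d⟨ω⟩_s`, the compensator of `f(ω)` in terms of the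
pathwise quadratic variation. -/
def zetaQV (f : ℝ → ℝ) (ω : PathSpace) (t : ℝ) : ℝ :=
  (1 / 2) * ∫ s in Ioc (0 : ℝ) t, deriv (deriv f) (ω.1 s) ∂(qvStieltjes ω).measure

/-- `ζ^f_t(ω) = (1/2) ∫_0^t f''(ω_s) ds` (compensator under Wiener measure). -/
def zetaLeb (f : ℝ → ℝ) (ω : PathSpace) (t : ℝ) : ℝ :=
  (1 / 2) * ∫ s in (0 : ℝ)..t, deriv (deriv f) (ω.1 s)

/-- `τ_t(ω) = inf{s ≥ 0 : ⟨ω⟩_s > t}` as a set. -/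
def nttSet (ω : PathSpace) (t : ℝ) : Set ℝ := {s : ℝ | 0 ≤ s ∧ t < qvOf ω s}

/-- The normalizing time transformation `ntt(ω)_t = ω(τ_t(ω))`, with
`ω(∞) := lim_{s→∞} ω(s)` when `⟨ω⟩` is bounded. -/
def ntt (ω : PathSpace) (t : ℝ) : ℝ :=
  if (nttSet ω t).Nonempty then ω.1 (sInf (nttSet ω t)) else limUnder atTop ω.1

/-- The normalizing time transformation as a map of the path space
(junk value for paths where `ntt ω` is not a continuous path). -/
def nttPath (ω : PathSpace) : PathSpace :=
  if h : Continuous (ntt ω) ∧ ∀ t ≤ 0, ntt ω t = 0 then ⟨ntt ω, h⟩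
  else ⟨fun _ => 0, continuous_const, fun _ _ => rfl⟩

/-- `⟨ω⟩_∞ = ∞`, i.e. the quadratic variation is unbounded. -/
def QVUnbounded (ω : PathSpace) : Prop := ¬ BddAbove (qvOf ω '' Ici 0)

/-- Vovk-type super-hedging outer expectation (with the modification of
Perkowski–Prömel): the minimal initial capital `λ > 0` such that some sequence of
`λ`-admissible simple strategies super-hedges `X` on `Ω^qv` in the sense of iterated
inferior limits. -/
def Ebar (X : PathSpace → EReal) : ℝ≥0∞ :=
  sInf {l : ℝ≥0∞ | ∃ lam : ℝ, 0 < lam ∧ l = ENNReal.ofReal lam ∧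
    ∃ H : ℕ → SimpleStrategy,
      (∀ n (ω : PathSpace) (t : ℝ), ω ∈ OmegaQV → 0 ≤ t → -lam ≤ capital (H n) t ω) ∧
      ∀ ω ∈ OmegaQV, X ω ≤
        liminf (fun t : ℝ =>
          liminf (fun n : ℕ => ((lam + capital (H n) t ω : ℝ) : EReal)) atTop) atTop}

/-- The outer measure `P̄`. -/
def Pbar (A : Set PathSpace) : ℝ≥0∞ := Ebar (A.indicator fun _ => (1 : EReal))

/-- Vovk's outer measure `Q̄`, defined through countable convex combinations of
admissible simple strategies. -/
def Qbar (A : Set PathSpace) : ℝ≥0∞ :=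
  sInf {l : ℝ≥0∞ | ∃ lam : ℝ, 0 < lam ∧ l = ENNReal.ofReal lam ∧
    ∃ (lams : ℕ → ℝ) (H : ℕ → SimpleStrategy),
      (∀ k, 0 < lams k) ∧ HasSum lams lam ∧
      (∀ k (ω : PathSpace) (t : ℝ), ω ∈ OmegaQV → 0 ≤ t → -(lams k) ≤ capital (H k) t ω) ∧
      ∀ ω ∈ OmegaQV,
        (A.indicator (fun _ => (1 : ℝ≥0∞)) ω) ≤
          liminf (fun t : ℝ => ∑' k, ENNReal.ofReal (lams k + capital (H k) t ω)) atTop}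

/-- `C_qv[0,T]`: quadratic-variation paths on `[0,T]` (modeled as paths in `Ω^qv`
which are constant after time `T`). -/
def CQV (T : ℝ) : Set PathSpace := {ω | IsQVPath ω ∧ ∀ t, T ≤ t → ω.1 t = ω.1 T}

/-- A martingale measure on `C_qv[0,T]`: a probability measure concentrated on
`C_qv[0,T]` under which the coordinate process is a martingale on `[0,T]` for the
natural filtration. -/
def IsMartingaleMeasureOn (T : ℝ) (P : Measure PathSpace) : Prop :=
  IsProbabilityMeasure P ∧ P (CQV T) = 1 ∧
  (∀ t, 0 ≤ t → t ≤ T → Integrable (eval t) P) ∧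
  ∀ s t, 0 ≤ s → s ≤ t → t ≤ T → P[eval t | natFilt s] =ᵐ[P] eval s

/-- The (possibly infinite) expectation `E_P[f] ∈ [-∞,∞]` of a real functional. -/
def expE {Ω : Type*} [MeasurableSpace Ω] (P : Measure Ω) (f : Ω → ℝ) : EReal :=
  ((∫⁻ ω, ENNReal.ofReal (f ω) ∂P : ℝ≥0∞) : EReal)
    - ((∫⁻ ω, ENNReal.ofReal (-(f ω)) ∂P : ℝ≥0∞) : EReal)

/-- The space `Υ` of stopped paths `(f,s)`, realized as pairs with `f` continuous,
constant on `(-∞,0]` and constant on `[s,∞)`. -/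
def Upsilon : Set ((ℝ → ℝ) × ℝ) :=
  {p | Continuous p.1 ∧ 0 ≤ p.2 ∧ (∀ t ≤ 0, p.1 t = p.1 0) ∧
    ∀ t, p.2 ≤ t → p.1 t = p.1 p.2}

/-- The distance on stopped paths, assuming `s ≤ t`. -/
def dUpAux (f : ℝ → ℝ) (s : ℝ) (g : ℝ → ℝ) (t : ℝ) : ℝ :=
  max (t - s) (max (⨆ u : Icc (0 : ℝ) s, |f u - g u|) (⨆ u : Icc s t, |g u - f s|))

/-- The metric `d_Υ` on the space of stopped paths. -/
def dUp (p q : (ℝ → ℝ) × ℝ) : ℝ :=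
  if p.2 ≤ q.2 then dUpAux p.1 p.2 q.1 q.2 else dUpAux q.1 q.2 p.1 p.2

/-- The stopped path `(f(· ∧ s), s) ∈ Υ` (with clamping making it canonical). -/
def stoppedAtFun (f : ℝ → ℝ) (s : ℝ) : (ℝ → ℝ) × ℝ :=
  (fun u => f (min (max u 0) (max s 0)), max s 0)

/-- `γ` is upper semicontinuous on `Υ` with respect to `d_Υ`. -/
def USCUpsilon (γ : (ℝ → ℝ) × ℝ → ℝ) : Prop :=
  ∀ p ∈ Upsilon, ∀ ε : ℝ, 0 < ε → ∃ δ : ℝ, 0 < δ ∧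
    ∀ q ∈ Upsilon, dUp p q < δ → γ q < γ p + ε

/-- `τ` is a stopping time of the natural filtration. -/
def IsStoppingTimeN (τ : PathSpace → ℝ) : Prop :=
  ∀ t, MeasurableSet[natFilt t] {ω | τ ω ≤ t}

end RF
namespace RF

instance : SecondCountableTopology PathSpace :=
  TopologicalSpace.secondCountableTopology_induced PathSpace C(ℝ, ℝ) _

/-- Inclusion of `PathSpace` into `C(ℝ, ℝ)`. -/
def incl (ω : PathSpace) : C(ℝ, ℝ) := ⟨ω.1, ω.2.1⟩

lemma continuous_incl : Continuous incl := continuous_induced_dom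

lemma continuous_eval_t (s : ℝ) : Continuous (eval s) := by
  have : eval s = (fun f : C(ℝ, ℝ) => f s) ∘ incl := rfl
  rw [this]
  exact (continuous_eval_const s).comp continuous_incl

lemma measurable_eval (s : ℝ) : Measurable (eval s) := (continuous_eval_t s).measurable

lemma natFilt_le_borel (t : ℝ) : natFilt t ≤ (inferInstance : MeasurableSpace PathSpace) := by
  refine iSup_le fun s => iSup_le fun _ => ?_
  exact MeasurableSpace.comap_le_iff_le_map.2 (measurable_eval s)

lemma natFilt_mono {s t : ℝ} (h : s ≤ t) : natFilt s ≤ natFilt t := by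
  refine iSup_le fun r => iSup_le fun hr => ?_
  exact le_iSup_of_le r (le_iSup_of_le (hr.trans h) le_rfl)

lemma measurable_of_stopping {τ : PathSpace → ℝ}
    (h : ∀ t, MeasurableSet[natFilt t] {ω | τ ω ≤ t}) : Measurable τ := by
  apply measurable_of_Iic
  intro t
  exact natFilt_le_borel t _ (h t)

@[simp] lemma stoppedPath_apply (ω : PathSpace) (t s : ℝ) :
    (stoppedPath ω t).1 s = ω.1 (min s t) := rfl

lemma stoppedPath_stoppedPath (ω : PathSpace) (t s : ℝ) :
    stoppedPath (stoppedPath ω t) s = stoppedPath ω (min s t) := by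
  apply Subtype.ext; funext r
  simp [stoppedPath, min_assoc]

lemma stoppedPath_stoppedPath_of_le (ω : PathSpace) {s t : ℝ} (h : s ≤ t) :
    stoppedPath (stoppedPath ω t) s = stoppedPath ω s := by
  rw [stoppedPath_stoppedPath, min_eq_left h]

lemma stoppedPath_self (ω : PathSpace) (t : ℝ) :
    stoppedPath (stoppedPath ω t) t = stoppedPath ω t :=
  stoppedPath_stoppedPath_of_le ω le_rfl

/-- `min` as a continuous map family. -/
def minCM (t : ℝ) : C(ℝ, ℝ) := ⟨fun s => min s t, continuous_id.min continuous_const⟩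

lemma continuous_minCM : Continuous minCM := by
  apply ContinuousMap.continuous_of_continuous_uncurry
  exact continuous_snd.min continuous_fst

lemma continuous_stoppedPath : Continuous fun p : PathSpace × ℝ => stoppedPath p.1 p.2 := by
  rw [continuous_induced_rng]
  have : (fun ω : PathSpace => (⟨ω.1, ω.2.1⟩ : C(ℝ, ℝ))) ∘
      (fun p : PathSpace × ℝ => stoppedPath p.1 p.2)
      = fun p : PathSpace × ℝ => (incl p.1).comp (minCM p.2) := by
    funext p; apply ContinuousMap.ext; intro s; rfl
  rw [this]
  exact ContinuousMap.continuous_comp'.comp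
    ((continuous_minCM.comp continuous_snd).prodMk (continuous_incl.comp continuous_fst))

lemma measurable_stoppedPath_comp {τ : PathSpace → ℝ} (hτ : Measurable τ) :
    Measurable fun ω => stoppedPath ω (τ ω) :=
  continuous_stoppedPath.measurable.comp (measurable_id.prodMk hτ)


lemma natFilt_le_comap_top (t : ℝ) :
    natFilt t ≤ MeasurableSpace.comap (fun ω => stoppedPath ω t) ⊤ := by
  refine iSup_le fun s => iSup_le fun hs => ?_
  have hfac : eval s = (eval s) ∘ (fun ω => stoppedPath ω t) := by
    funext ω
    simp only [Function.comp_apply, eval, stoppedPath_apply, min_eq_left hs]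
  rw [hfac, ← MeasurableSpace.comap_comp]
  exact MeasurableSpace.comap_mono le_top

/-- Sets in `natFilt t` only depend on the path stopped at `t`. -/
lemma natFilt_invariant {t : ℝ} {E : Set PathSpace} (hE : MeasurableSet[natFilt t] E)
    {ω ω' : PathSpace} (h : stoppedPath ω t = stoppedPath ω' t) : ω ∈ E ↔ ω' ∈ E := by
  obtain ⟨S, -, rfl⟩ := natFilt_le_comap_top t E hE
  simp only [Set.mem_preimage, h]

/-- Galmarino-type: comparison of a stopping time with levels `s ≤ t` only depends on the
stopped path. -/
lemma stopping_le_iff {τ : PathSpace → ℝ}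
    (hτ : ∀ u, MeasurableSet[natFilt u] {ω | τ ω ≤ u}) {t : ℝ} {ω ω' : PathSpace}
    (h : stoppedPath ω t = stoppedPath ω' t) {s : ℝ} (hs : s ≤ t) :
    τ ω ≤ s ↔ τ ω' ≤ s := by
  have h' : stoppedPath ω s = stoppedPath ω' s := by
    rw [← stoppedPath_stoppedPath_of_le ω hs, h, stoppedPath_stoppedPath_of_le ω' hs]
  exact natFilt_invariant (hτ s) h'

lemma stopping_eq_of_le {τ : PathSpace → ℝ}
    (hτ : ∀ u, MeasurableSet[natFilt u] {ω | τ ω ≤ u}) {t : ℝ} {ω ω' : PathSpace}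
    (h : stoppedPath ω t = stoppedPath ω' t) (hle : τ ω ≤ t) : τ ω' = τ ω := by
  have h1 : τ ω' ≤ τ ω := (stopping_le_iff hτ h hle).1 le_rfl
  by_contra hne
  have h2 : τ ω' < τ ω := lt_of_le_of_ne h1 hne
  have := (stopping_le_iff hτ h (h1.trans hle)).2 le_rfl
  exact absurd (this.trans_lt h2) (lt_irrefl _)

/-- A function measurable w.r.t. the comap of a map `g` only depends on `g`. -/
lemma comap_invariant {α β : Type*} [MeasurableSpace β] [MeasurableSingletonClass β]
    {g : PathSpace → α} {F : PathSpace → β}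
    (hF : @Measurable _ _ (MeasurableSpace.comap g ⊤) _ F)
    {ω ω' : PathSpace} (h : g ω = g ω') : F ω = F ω' := by
  obtain ⟨S, -, hS⟩ := hF (measurableSet_singleton (F ω))
  have hω : ω ∈ g ⁻¹' S := by rw [hS]; exact rfl
  have hω' : ω' ∈ g ⁻¹' S := by rw [Set.mem_preimage, ← h]; exact hω
  rw [hS] at hω'
  exact (Set.mem_singleton_iff.1 hω').symm


/-! ### Merging two simple strategies -/

namespace SimpleStrategy

variable (H G : SimpleStrategy)

lemma tau_strictMono (ω : PathSpace) : StrictMono fun n => H.τ n ω :=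
  strictMono_nat_of_lt_succ fun n => H.tau_lt n ω

lemma tau_mono (ω : PathSpace) : Monotone fun n => H.τ n ω := (H.tau_strictMono ω).monotone

lemma tau_nonneg (n : ℕ) (ω : PathSpace) : 0 ≤ H.τ n ω := by
  have := (H.tau_mono ω) (Nat.zero_le n)
  simpa [H.tau_zero ω] using this

lemma exNext (x : ℝ) (ω : PathSpace) : ∃ n, x < H.τ n ω :=
  ((H.tau_tendsto ω).eventually_gt_atTop x).exists

/-- The index of the first stopping time strictly after `x`. -/
def nextIdx (x : ℝ) (ω : PathSpace) : ℕ := Nat.find (H.exNext x ω)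

/-- The first stopping time of `H` strictly after `x`. -/
def next (x : ℝ) (ω : PathSpace) : ℝ := H.τ (H.nextIdx x ω) ω

lemma lt_next (x : ℝ) (ω : PathSpace) : x < H.next x ω := Nat.find_spec (H.exNext x ω)

lemma next_min {x : ℝ} {ω : PathSpace} {n : ℕ} (h : x < H.τ n ω) : H.next x ω ≤ H.τ n ω :=
  H.tau_mono ω (Nat.find_min' (H.exNext x ω) h)

lemma nextIdx_pos {x : ℝ} (hx : 0 ≤ x) (ω : PathSpace) : 0 < H.nextIdx x ω := by
  rcases Nat.eq_zero_or_pos (H.nextIdx x ω) with h | h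
  · exfalso
    have := Nat.find_spec (H.exNext x ω)
    rw [show Nat.find (H.exNext x ω) = H.nextIdx x ω from rfl, h, H.tau_zero ω] at this
    exact absurd this (not_lt.2 hx)
  · exact h

/-- The index of the last stopping time `≤ x` (for `x ≥ 0`). -/
def idx (x : ℝ) (ω : PathSpace) : ℕ := H.nextIdx x ω - 1

lemma tau_idx_le {x : ℝ} (hx : 0 ≤ x) (ω : PathSpace) : H.τ (H.idx x ω) ω ≤ x := by
  have hpos := H.nextIdx_pos hx ω
  have hlt : H.idx x ω < Nat.find (H.exNext x ω) := by
    show H.nextIdx x ω - 1 < H.nextIdx x ω; omega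
  have := Nat.find_min (H.exNext x ω) hlt
  exact not_lt.1 this

lemma lt_tau_idx_succ {x : ℝ} (hx : 0 ≤ x) (ω : PathSpace) : x < H.τ (H.idx x ω + 1) ω := by
  have hpos := H.nextIdx_pos hx ω
  have : H.idx x ω + 1 = H.nextIdx x ω := by unfold idx; omega
  rw [this]
  exact H.lt_next x ω

/-- The merged sequence of stopping times of two simple strategies: the increasing
enumeration of the union of the two families of stopping times. -/
def mergeTau : ℕ → PathSpace → ℝ
  | 0 => fun _ => 0
  | k + 1 => fun ω => min (H.next (mergeTau k ω) ω) (G.next (mergeTau k ω) ω)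

lemma mergeTau_zero (ω : PathSpace) : mergeTau H G 0 ω = 0 := rfl

lemma mergeTau_lt (k : ℕ) (ω : PathSpace) : mergeTau H G k ω < mergeTau H G (k + 1) ω :=
  lt_min (H.lt_next _ ω) (G.lt_next _ ω)

lemma mergeTau_strictMono (ω : PathSpace) : StrictMono fun k => mergeTau H G k ω :=
  strictMono_nat_of_lt_succ fun k => mergeTau_lt H G k ω

lemma mergeTau_nonneg (k : ℕ) (ω : PathSpace) : 0 ≤ mergeTau H G k ω := by
  have := (mergeTau_strictMono H G ω).monotone (Nat.zero_le k)
  simpa [mergeTau_zero] using this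

lemma mergeTau_exists_ab (k : ℕ) (ω : PathSpace) :
    ∃ a b : ℕ, k ≤ a + b ∧ H.τ a ω ≤ mergeTau H G k ω ∧ G.τ b ω ≤ mergeTau H G k ω := by
  induction k with
  | zero => exact ⟨0, 0, le_rfl, by simp [H.tau_zero, mergeTau_zero], by
      simp [G.tau_zero, mergeTau_zero]⟩
  | succ k ih =>
    obtain ⟨a, b, hk, ha, hb⟩ := ih
    rcases le_total (H.next (mergeTau H G k ω) ω) (G.next (mergeTau H G k ω) ω) with h | h
    · refine ⟨a + 1, b, by omega, ?_, ?_⟩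
      · have hval : mergeTau H G (k + 1) ω = H.τ (H.nextIdx (mergeTau H G k ω) ω) ω := by
          show min _ _ = _; rw [min_eq_left h]; rfl
        have halt : a < H.nextIdx (mergeTau H G k ω) ω := by
          by_contra hcon
          push_neg at hcon
          have := H.tau_mono ω hcon
          have h2 : mergeTau H G k ω < H.τ a ω := lt_of_lt_of_le (H.lt_next _ ω) this
          exact absurd ha (not_le.2 h2)
        rw [hval]
        exact H.tau_mono ω halt
      · exact hb.trans (mergeTau_lt H G k ω).le
    · refine ⟨a, b + 1, by omega, ha.trans (mergeTau_lt H G k ω).le, ?_⟩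
      have hval : mergeTau H G (k + 1) ω = G.τ (G.nextIdx (mergeTau H G k ω) ω) ω := by
        show min _ _ = _; rw [min_eq_right h]; rfl
      have halt : b < G.nextIdx (mergeTau H G k ω) ω := by
        by_contra hcon
        push_neg at hcon
        have := G.tau_mono ω hcon
        have h2 : mergeTau H G k ω < G.τ b ω := lt_of_lt_of_le (G.lt_next _ ω) this
        exact absurd hb (not_le.2 h2)
      rw [hval]
      exact G.tau_mono ω halt

lemma mergeTau_ge (k : ℕ) (ω : PathSpace) :
    min (H.τ ((k + 1) / 2) ω) (G.τ ((k + 1) / 2) ω) ≤ mergeTau H G k ω := by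
  obtain ⟨a, b, hk, ha, hb⟩ := mergeTau_exists_ab H G k ω
  have : (k + 1) / 2 ≤ a ∨ (k + 1) / 2 ≤ b := by omega
  rcases this with h | h
  · exact le_trans (min_le_left _ _) (le_trans (H.tau_mono ω h) ha)
  · exact le_trans (min_le_right _ _) (le_trans (G.tau_mono ω h) hb)

lemma mergeTau_tendsto (ω : PathSpace) : Tendsto (fun k => mergeTau H G k ω) atTop atTop := by
  refine tendsto_atTop_mono (fun k => mergeTau_ge H G k ω) ?_
  rw [tendsto_atTop]
  intro c
  have h1 := (H.tau_tendsto ω).eventually_ge_atTop c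
  have h2 := (G.tau_tendsto ω).eventually_ge_atTop c
  have h3 : Tendsto (fun k : ℕ => (k + 1) / 2) atTop atTop := by
    apply tendsto_atTop_atTop.2
    intro m
    exact ⟨2 * m, fun a ha => by omega⟩
  filter_upwards [h3.eventually h1, h3.eventually h2] with k hk1 hk2
  exact le_min hk1 hk2

lemma measurable_tau (n : ℕ) : Measurable fun ω => H.τ n ω :=
  measurable_of_stopping (H.tau_stopping n)

lemma measurable_nat_comp {f : PathSpace → ℕ} {g : ℕ → PathSpace → ℝ}
    (hf : ∀ m, MeasurableSet {ω | f ω = m}) (hg : ∀ m, Measurable (g m)) :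
    Measurable fun ω => g (f ω) ω := by
  intro B hB
  have : (fun ω => g (f ω) ω) ⁻¹' B = ⋃ m, ({ω | f ω = m} ∩ g m ⁻¹' B) := by
    ext ω
    simp only [Set.mem_preimage, Set.mem_iUnion, Set.mem_inter_iff, Set.mem_setOf_eq]
    constructor
    · intro h; exact ⟨f ω, rfl, h⟩
    · rintro ⟨m, hm, h⟩; rw [hm]; exact h
  rw [this]
  exact MeasurableSet.iUnion fun m => (hf m).inter (hg m hB)

lemma measurable_nextIdx_fiber {ρ : PathSpace → ℝ} (hρ : Measurable ρ) (m : ℕ) :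
    MeasurableSet {ω | H.nextIdx (ρ ω) ω = m} := by
  have : {ω | H.nextIdx (ρ ω) ω = m}
      = {ω | ρ ω < H.τ m ω} ∩ ⋂ i ∈ Finset.range m, {ω | ¬ ρ ω < H.τ i ω} := by
    ext ω
    simp only [Set.mem_setOf_eq, Set.mem_inter_iff, Set.mem_iInter, Finset.mem_range]
    constructor
    · intro h
      refine ⟨?_, fun i hi => ?_⟩
      · rw [← h]; exact Nat.find_spec (H.exNext (ρ ω) ω)
      · rw [← h] at hi; exact Nat.find_min (H.exNext (ρ ω) ω) hi
    · rintro ⟨h1, h2⟩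
      exact (Nat.find_eq_iff (H.exNext (ρ ω) ω)).2 ⟨h1, fun i hi => h2 i hi⟩
  rw [this]
  refine (measurableSet_lt hρ (H.measurable_tau m)).inter ?_
  exact MeasurableSet.biInter (Set.to_countable _)
    (fun i _ => (measurableSet_lt hρ (H.measurable_tau i)).compl)

lemma measurable_next_comp {ρ : PathSpace → ℝ} (hρ : Measurable ρ) :
    Measurable fun ω => H.next (ρ ω) ω :=
  measurable_nat_comp (H.measurable_nextIdx_fiber hρ) (fun m => H.measurable_tau m)

lemma measurable_idx_fiber {ρ : PathSpace → ℝ} (hρ : Measurable ρ) (m : ℕ) :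
    MeasurableSet {ω | H.idx (ρ ω) ω = m} := by
  have : {ω | H.idx (ρ ω) ω = m} = ⋃ j, {ω | H.nextIdx (ρ ω) ω = j} ∩ {ω | j - 1 = m} := by
    ext ω
    simp only [Set.mem_setOf_eq, Set.mem_iUnion, Set.mem_inter_iff, idx]
    constructor
    · intro h; exact ⟨H.nextIdx (ρ ω) ω, rfl, h⟩
    · rintro ⟨j, h1, h2⟩; rw [h1]; exact h2
  rw [this]
  refine MeasurableSet.iUnion fun j => (H.measurable_nextIdx_fiber hρ j).inter ?_
  by_cases h : j - 1 = m
  · simp [h]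
  · simp [h]

lemma measurable_F (n : ℕ) : Measurable (H.F n) := by
  refine (H.F_meas n).mono ?_ le_rfl
  rw [MeasurableSpace.comap_le_iff_le_map]
  exact Measurable.le_map (measurable_stoppedPath_comp (H.measurable_tau n))

lemma measurable_mergeTau (k : ℕ) : Measurable fun ω => mergeTau H G k ω := by
  induction k with
  | zero => exact measurable_const
  | succ k ih =>
    exact (H.measurable_next_comp ih).min (G.measurable_next_comp ih)

lemma mergeTau_stopping (k : ℕ) (t : ℝ) :
    MeasurableSet[natFilt t] {ω | mergeTau H G k ω ≤ t} := by
  induction k generalizing t with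
  | zero =>
    letI : MeasurableSpace PathSpace := natFilt t
    by_cases h : (0 : ℝ) ≤ t
    · have : {ω : PathSpace | mergeTau H G 0 ω ≤ t} = Set.univ := by
        ext ω; simp [mergeTau_zero, h]
      rw [this]; exact MeasurableSet.univ
    · have : {ω : PathSpace | mergeTau H G 0 ω ≤ t} = ∅ := by
        ext ω; simp [mergeTau_zero, h]
      rw [this]; exact MeasurableSet.empty
  | succ k ih =>
    letI : MeasurableSpace PathSpace := natFilt t
    have key : ∀ (K : SimpleStrategy),
        MeasurableSet[natFilt t] {ω | K.next (mergeTau H G k ω) ω ≤ t} := by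
      intro K
      have heq : {ω | K.next (mergeTau H G k ω) ω ≤ t}
          = ⋃ n, ⋃ q : ℚ, ({ω | mergeTau H G k ω ≤ (q : ℝ)} ∩
              {ω | K.τ n ω ≤ (q : ℝ)}ᶜ ∩ {ω | K.τ n ω ≤ t}) := by
        ext ω
        simp only [Set.mem_setOf_eq, Set.mem_iUnion, Set.mem_inter_iff, Set.mem_compl_iff]
        constructor
        · intro h
          obtain ⟨q, hq1, hq2⟩ := exists_rat_btwn (K.lt_next (mergeTau H G k ω) ω)
          exact ⟨K.nextIdx (mergeTau H G k ω) ω, q, ⟨hq1.le, not_le.2 hq2⟩, h⟩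
        · rintro ⟨n, q, ⟨hq1, hq2⟩, hn⟩
          have : mergeTau H G k ω < K.τ n ω := lt_of_le_of_lt hq1 (not_le.1 hq2)
          exact (K.next_min this).trans hn
      rw [heq]
      refine MeasurableSet.iUnion fun n => MeasurableSet.iUnion fun q => ?_
      by_cases hq : (q : ℝ) ≤ t
      · refine MeasurableSet.inter (MeasurableSet.inter ?_ ?_) ?_
        · exact natFilt_mono hq _ (ih (q : ℝ))
        · exact (natFilt_mono hq _ (K.tau_stopping n (q : ℝ))).compl
        · exact K.tau_stopping n t
      · have : {ω : PathSpace | mergeTau H G k ω ≤ (q : ℝ)} ∩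
            {ω | K.τ n ω ≤ (q : ℝ)}ᶜ ∩ {ω | K.τ n ω ≤ t} = ∅ := by
          ext ω
          simp only [Set.mem_inter_iff, Set.mem_compl_iff, Set.mem_setOf_eq,
            Set.mem_empty_iff_false, iff_false]
          rintro ⟨⟨h1, h2⟩, h3⟩
          exact h2 (h3.trans (not_le.1 hq).le)
        rw [this]; exact MeasurableSet.empty
    have : {ω | mergeTau H G (k + 1) ω ≤ t}
        = {ω | H.next (mergeTau H G k ω) ω ≤ t} ∪ {ω | G.next (mergeTau H G k ω) ω ≤ t} := by
      ext ω
      simp only [Set.mem_setOf_eq, Set.mem_union]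
      exact min_le_iff
    rw [this]
    exact (key H).union (key G)

section Invariance

variable {T : ℝ} {ω ω' : PathSpace}

lemma tau_eq_of_stopped (K : SimpleStrategy) (h : stoppedPath ω T = stoppedPath ω' T)
    {n : ℕ} (hn : K.τ n ω ≤ T) : K.τ n ω' = K.τ n ω :=
  stopping_eq_of_le (K.tau_stopping n) h hn

lemma nextIdx_invariant (K : SimpleStrategy) (h : stoppedPath ω T = stoppedPath ω' T)
    {x : ℝ} (hx : x ≤ T) : K.nextIdx x ω' = K.nextIdx x ω := by
  have hiff : ∀ n, x < K.τ n ω ↔ x < K.τ n ω' := by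
    intro n
    rw [← not_le, ← not_le]
    exact not_congr (stopping_le_iff (K.tau_stopping n) h hx)
  apply le_antisymm
  · exact Nat.find_min' _ ((hiff _).1 (Nat.find_spec (K.exNext x ω)))
  · exact Nat.find_min' _ ((hiff _).2 (Nat.find_spec (K.exNext x ω')))

lemma idx_invariant (K : SimpleStrategy) (h : stoppedPath ω T = stoppedPath ω' T)
    {x : ℝ} (hx : x ≤ T) : K.idx x ω' = K.idx x ω := by
  unfold idx
  rw [nextIdx_invariant K h hx]

lemma next_cases (K : SimpleStrategy) (h : stoppedPath ω T = stoppedPath ω' T)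
    {x : ℝ} (hx : x ≤ T) :
    (K.next x ω' = K.next x ω ∧ K.next x ω ≤ T) ∨ (T < K.next x ω ∧ T < K.next x ω') := by
  have hidx := nextIdx_invariant K h hx
  set n := K.nextIdx x ω with hn
  by_cases hle : K.τ n ω ≤ T
  · left
    refine ⟨?_, hle⟩
    show K.τ (K.nextIdx x ω') ω' = K.τ n ω
    rw [hidx]
    exact tau_eq_of_stopped K h hle
  · right
    push_neg at hle
    refine ⟨hle, ?_⟩
    show T < K.τ (K.nextIdx x ω') ω'
    rw [hidx]
    rw [← not_le]
    intro hcon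
    rw [← stopping_le_iff (K.tau_stopping n) h le_rfl] at hcon
    exact absurd hcon (not_le.2 hle)

lemma mergeTau_invariant (H G : SimpleStrategy) (h : stoppedPath ω T = stoppedPath ω' T)
    (k : ℕ) (hk : mergeTau H G k ω ≤ T) : mergeTau H G k ω' = mergeTau H G k ω := by
  induction k with
  | zero => rfl
  | succ k ih =>
    have hk' : mergeTau H G k ω ≤ T := ((mergeTau_lt H G k ω).le).trans hk
    have hρ := ih hk'
    show min (H.next (mergeTau H G k ω') ω') (G.next (mergeTau H G k ω') ω')
        = min (H.next (mergeTau H G k ω) ω) (G.next (mergeTau H G k ω) ω)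
    rw [hρ]
    rcases next_cases H h hk' with ⟨ha, haT⟩ | ⟨haT, haT'⟩ <;>
      rcases next_cases G h hk' with ⟨hb, hbT⟩ | ⟨hbT, hbT'⟩
    · rw [ha, hb]
    · have hmin : min (H.next (mergeTau H G k ω) ω) (G.next (mergeTau H G k ω) ω)
          = H.next (mergeTau H G k ω) ω := min_eq_left (haT.trans hbT.le)
      rw [ha, hmin, min_eq_left]
      exact haT.trans hbT'.le
    · have hmin : min (H.next (mergeTau H G k ω) ω) (G.next (mergeTau H G k ω) ω)
          = G.next (mergeTau H G k ω) ω := min_eq_right (hbT.trans haT.le)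
      rw [hb, hmin, min_eq_right]
      exact hbT.trans haT'.le
    · exfalso
      have : T < min (H.next (mergeTau H G k ω) ω) (G.next (mergeTau H G k ω) ω) :=
        lt_min haT hbT
      exact absurd hk (not_le.2 this)

lemma F_invariant (K : SimpleStrategy) (h : stoppedPath ω T = stoppedPath ω' T)
    {n : ℕ} (hn : K.τ n ω ≤ T) : K.F n ω' = K.F n ω := by
  have hg : (fun ω => stoppedPath ω (K.τ n ω)) ω = (fun ω => stoppedPath ω (K.τ n ω)) ω' := by
    show stoppedPath ω (K.τ n ω) = stoppedPath ω' (K.τ n ω')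
    rw [tau_eq_of_stopped K h hn]
    rw [← stoppedPath_stoppedPath_of_le ω hn, h, stoppedPath_stoppedPath_of_le ω' hn]
  exact (comap_invariant ((K.F_meas n).mono (MeasurableSpace.comap_mono le_top) le_rfl) hg).symm

end Invariance

/-- The position process of the merged strategy. -/
def mergeF (H G : SimpleStrategy) (k : ℕ) (ω : PathSpace) : ℝ :=
  H.F (H.idx (mergeTau H G k ω) ω) ω + G.F (G.idx (mergeTau H G k ω) ω) ω

lemma tau_succ_gt_mergeTau (H G : SimpleStrategy) (k : ℕ) (ω : PathSpace) :
    mergeTau H G k ω < H.τ (k + 1) ω ∧ mergeTau H G k ω < G.τ (k + 1) ω := by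
  induction k with
  | zero =>
    constructor
    · rw [mergeTau_zero, ← H.tau_zero ω]; exact H.tau_lt 0 ω
    · rw [mergeTau_zero, ← G.tau_zero ω]; exact G.tau_lt 0 ω
  | succ k ih =>
    have hH : mergeTau H G (k + 1) ω ≤ H.τ (k + 1) ω :=
      (min_le_left _ _).trans (H.next_min ih.1)
    have hG : mergeTau H G (k + 1) ω ≤ G.τ (k + 1) ω :=
      (min_le_right _ _).trans (G.next_min ih.2)
    exact ⟨hH.trans_lt (H.tau_lt (k + 1) ω), hG.trans_lt (G.tau_lt (k + 1) ω)⟩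

lemma idx_mergeTau_le (H G : SimpleStrategy) (k : ℕ) (ω : PathSpace) :
    H.idx (mergeTau H G k ω) ω ≤ k := by
  have h := (tau_succ_gt_mergeTau H G k ω).1
  have : H.nextIdx (mergeTau H G k ω) ω ≤ k + 1 := Nat.find_min' _ h
  unfold idx; omega

lemma idx_mergeTau_le' (H G : SimpleStrategy) (k : ℕ) (ω : PathSpace) :
    G.idx (mergeTau H G k ω) ω ≤ k := by
  have h := (tau_succ_gt_mergeTau H G k ω).2
  have : G.nextIdx (mergeTau H G k ω) ω ≤ k + 1 := Nat.find_min' _ h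
  unfold idx; omega

lemma measurable_mergeF (H G : SimpleStrategy) (k : ℕ) : Measurable (mergeF H G k) := by
  unfold mergeF
  have h1 : Measurable fun ω => H.F (H.idx (mergeTau H G k ω) ω) ω :=
    measurable_nat_comp (H.measurable_idx_fiber (measurable_mergeTau H G k)) H.measurable_F
  have h2 : Measurable fun ω => G.F (G.idx (mergeTau H G k ω) ω) ω :=
    measurable_nat_comp (G.measurable_idx_fiber (measurable_mergeTau H G k)) G.measurable_F
  exact h1.add h2

lemma mergeF_invariant (H G : SimpleStrategy) (k : ℕ) (ω : PathSpace) :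
    mergeF H G k (stoppedPath ω (mergeTau H G k ω)) = mergeF H G k ω := by
  set T := mergeTau H G k ω with hT
  set ω' := stoppedPath ω T with hω'
  have h : stoppedPath ω T = stoppedPath ω' T := (stoppedPath_self ω T).symm
  have hρ : mergeTau H G k ω' = T := mergeTau_invariant H G h k le_rfl
  have hT0 : 0 ≤ T := mergeTau_nonneg H G k ω
  unfold mergeF
  rw [hρ, ← hT]
  rw [idx_invariant H h le_rfl, idx_invariant G h le_rfl]
  rw [F_invariant H h (H.tau_idx_le hT0 ω), F_invariant G h (G.tau_idx_le hT0 ω)]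

/-- The merge of two simple strategies: trades both simultaneously. -/
def merge (H G : SimpleStrategy) : SimpleStrategy where
  τ := mergeTau H G
  F := mergeF H G
  tau_zero := mergeTau_zero H G
  tau_lt := mergeTau_lt H G
  tau_tendsto := mergeTau_tendsto H G
  tau_stopping := mergeTau_stopping H G
  F_meas := by
    intro k B hB
    refine ⟨mergeF H G k ⁻¹' B, measurable_mergeF H G k hB, ?_⟩
    ext ω
    simp only [Set.mem_preimage]
    rw [mergeF_invariant H G k ω]
  F_bdd := by
    intro k
    have hCH : ∀ n, ∃ C, ∀ ω, |H.F n ω| ≤ C := H.F_bdd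
    have hCG : ∀ n, ∃ C, ∀ ω, |G.F n ω| ≤ C := G.F_bdd
    choose CH hCH using hCH
    choose CG hCG using hCG
    refine ⟨∑ n ∈ Finset.range (k + 1), (CH n + CG n), fun ω => ?_⟩
    have hnon : Nonempty PathSpace := ⟨⟨fun _ => 0, continuous_const, fun _ _ => rfl⟩⟩
    have hCH0 : ∀ n, 0 ≤ CH n := fun n => (abs_nonneg _).trans (hCH n (Classical.arbitrary _))
    have hCG0 : ∀ n, 0 ≤ CG n := fun n => (abs_nonneg _).trans (hCG n (Classical.arbitrary _))
    have hi : H.idx (mergeTau H G k ω) ω < k + 1 := Nat.lt_succ_of_le (idx_mergeTau_le H G k ω)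
    have hj : G.idx (mergeTau H G k ω) ω < k + 1 := Nat.lt_succ_of_le (idx_mergeTau_le' H G k ω)
    calc |mergeF H G k ω|
        ≤ |H.F (H.idx (mergeTau H G k ω) ω) ω| + |G.F (G.idx (mergeTau H G k ω) ω) ω| :=
          abs_add_le _ _
      _ ≤ CH (H.idx (mergeTau H G k ω) ω) + CG (G.idx (mergeTau H G k ω) ω) :=
          add_le_add (hCH _ _) (hCG _ _)
      _ ≤ (∑ n ∈ Finset.range (k + 1), CH n) + ∑ n ∈ Finset.range (k + 1), CG n :=
          add_le_add
            (Finset.single_le_sum (fun n _ => hCH0 n) (Finset.mem_range.2 hi))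
            (Finset.single_le_sum (fun n _ => hCG0 n) (Finset.mem_range.2 hj))
      _ = ∑ n ∈ Finset.range (k + 1), (CH n + CG n) := (Finset.sum_add_distrib).symm

/-! ### Capital of the merged strategy -/

lemma capital_eq_sum (H : SimpleStrategy) (t : ℝ) (ω : PathSpace) {N : ℕ}
    (hN : t ≤ H.τ N ω) :
    capital H t ω = ∑ n ∈ Finset.range N,
      H.F n ω * (ω.1 (min (H.τ (n + 1) ω) t) - ω.1 (min (H.τ n ω) t)) := by
  apply tsum_eq_sum
  intro n hn
  rw [Finset.mem_range, not_lt] at hn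
  have h1 : t ≤ H.τ n ω := hN.trans (H.tau_mono ω hn)
  have h2 : t ≤ H.τ (n + 1) ω := h1.trans (H.tau_lt n ω).le
  rw [min_eq_right h1, min_eq_right h2, sub_self, mul_zero]

lemma capital_nonpos (H : SimpleStrategy) {t : ℝ} (ht : t ≤ 0) (ω : PathSpace) :
    capital H t ω = 0 := by
  have : ∀ n : ℕ, H.F n ω * (ω.1 (min (H.τ (n + 1) ω) t) - ω.1 (min (H.τ n ω) t)) = 0 := by
    intro n
    rw [min_eq_right (ht.trans (H.tau_nonneg _ ω)), min_eq_right (ht.trans (H.tau_nonneg _ ω)),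
      sub_self, mul_zero]
  unfold capital
  rw [tsum_congr this, tsum_zero]

lemma capital_zero (H : SimpleStrategy) (ω : PathSpace) : capital H 0 ω = 0 :=
  capital_nonpos H le_rfl ω

lemma capital_step (H : SimpleStrategy) (ω : PathSpace) {u v : ℝ} (hu : 0 ≤ u) (huv : u ≤ v)
    (hnext : v ≤ H.next u ω) :
    capital H v ω = capital H u ω + H.F (H.idx u ω) ω * (ω.1 v - ω.1 u) := by
  obtain ⟨N, hN⟩ := H.exNext v ω
  rw [capital_eq_sum H v ω hN.le, capital_eq_sum H u ω (huv.trans hN.le)]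
  set i := H.idx u ω with hi
  have hiN : i < N := by
    by_contra hcon
    push_neg at hcon
    have := H.tau_mono ω hcon
    have h2 : H.τ i ω ≤ u := H.tau_idx_le hu ω
    exact absurd hN (not_lt.2 ((le_trans this h2).trans huv))
  have key : ∑ n ∈ Finset.range N,
      (H.F n ω * (ω.1 (min (H.τ (n + 1) ω) v) - ω.1 (min (H.τ n ω) v))
        - H.F n ω * (ω.1 (min (H.τ (n + 1) ω) u) - ω.1 (min (H.τ n ω) u)))
      = H.F i ω * (ω.1 v - ω.1 u) := by
    rw [Finset.sum_eq_single_of_mem i (Finset.mem_range.2 hiN)]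
    · have h1 : H.τ i ω ≤ u := H.tau_idx_le hu ω
      have h2 : v ≤ H.τ (i + 1) ω := hnext.trans (H.next_min (H.lt_tau_idx_succ hu ω))
      rw [min_eq_left (h1.trans huv), min_eq_left h1, min_eq_right h2,
        min_eq_right (huv.trans h2), ← mul_sub]
      congr 1
      ring
    · intro n _ hne
      rcases lt_or_gt_of_ne hne with hlt | hgt
      · have h1 : H.τ (n + 1) ω ≤ u := (H.tau_mono ω (Nat.succ_le_of_lt hlt)).trans
          (H.tau_idx_le hu ω)
        have h0 : H.τ n ω ≤ u := (H.tau_lt n ω).le.trans h1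
        rw [min_eq_left (h1.trans huv), min_eq_left h1, min_eq_left (h0.trans huv),
          min_eq_left h0]
        ring
      · have h0 : v ≤ H.τ n ω :=
          (hnext.trans (H.next_min (H.lt_tau_idx_succ hu ω))).trans (H.tau_mono ω hgt)
        have h1 : v ≤ H.τ (n + 1) ω := h0.trans (H.tau_lt n ω).le
        rw [min_eq_right h1, min_eq_right (huv.trans h1), min_eq_right h0,
          min_eq_right (huv.trans h0)]
        ring
  rw [Finset.sum_sub_distrib] at key
  linarith [key]

/-- Telescoping the capital of `H` along a refining time grid. -/
lemma capital_along_grid (H : SimpleStrategy) (ω : PathSpace) (ρ : ℕ → ℝ) (hρ0 : ρ 0 = 0)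
    (hmono : ∀ k, ρ k ≤ ρ (k + 1)) (hnonneg : ∀ k, 0 ≤ ρ k)
    (hstep : ∀ k, ρ (k + 1) ≤ H.next (ρ k) ω)
    (t : ℝ) (ht : 0 ≤ t) {K : ℕ} (hK : t ≤ ρ K) :
    capital H t ω = ∑ k ∈ Finset.range K,
      H.F (H.idx (ρ k) ω) ω * (ω.1 (min (ρ (k + 1)) t) - ω.1 (min (ρ k) t)) := by
  have step : ∀ k, capital H (min (ρ (k + 1)) t) ω
      = capital H (min (ρ k) t) ω +
        H.F (H.idx (ρ k) ω) ω * (ω.1 (min (ρ (k + 1)) t) - ω.1 (min (ρ k) t)) := by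
    intro k
    by_cases hk : ρ k ≤ t
    · rw [min_eq_left hk]
      refine capital_step H ω (hnonneg k) (le_min (hmono k) hk) ?_
      exact (min_le_left _ _).trans (hstep k)
    · push_neg at hk
      rw [min_eq_right hk.le, min_eq_right (hk.le.trans (hmono k)), sub_self, mul_zero, add_zero]
  have tele : ∀ K', capital H (min (ρ K') t) ω
      = ∑ k ∈ Finset.range K',
        H.F (H.idx (ρ k) ω) ω * (ω.1 (min (ρ (k + 1)) t) - ω.1 (min (ρ k) t)) := by
    intro K'
    induction K' with
    | zero => rw [Finset.sum_range_zero, hρ0, min_eq_left ht, capital_zero]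
    | succ K' ih => rw [Finset.sum_range_succ, ← ih, step K']
  have := tele K
  rwa [min_eq_right hK] at this

lemma capital_merge (H G : SimpleStrategy) (t : ℝ) (ω : PathSpace) :
    capital (merge H G) t ω = capital H t ω + capital G t ω := by
  rcases le_or_gt t 0 with ht | ht
  · rw [capital_nonpos _ ht, capital_nonpos _ ht, capital_nonpos _ ht, add_zero]
  obtain ⟨K, hK⟩ := ((mergeTau_tendsto H G ω).eventually_ge_atTop t).exists
  have hmm : capital (merge H G) t ω = ∑ k ∈ Finset.range K,
      mergeF H G k ω *
        (ω.1 (min (mergeTau H G (k + 1) ω) t) - ω.1 (min (mergeTau H G k ω) t)) :=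
    capital_eq_sum (merge H G) t ω (N := K) hK
  have hH := capital_along_grid H ω (fun k => mergeTau H G k ω) (mergeTau_zero H G ω)
    (fun k => (mergeTau_lt H G k ω).le) (fun k => mergeTau_nonneg H G k ω)
    (fun k => min_le_left _ _) t ht.le hK
  have hG := capital_along_grid G ω (fun k => mergeTau H G k ω) (mergeTau_zero H G ω)
    (fun k => (mergeTau_lt H G k ω).le) (fun k => mergeTau_nonneg H G k ω)
    (fun k => min_le_right _ _) t ht.le hK
  rw [hmm, hH, hG, ← Finset.sum_add_distrib]
  apply Finset.sum_congr rfl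
  intro k _
  rw [← add_mul]
  rfl

/-- Scaling a simple strategy by a constant factor. -/
def smulS (c : ℝ) (H : SimpleStrategy) : SimpleStrategy where
  τ := H.τ
  F := fun n ω => c * H.F n ω
  tau_zero := H.tau_zero
  tau_lt := H.tau_lt
  tau_tendsto := H.tau_tendsto
  tau_stopping := H.tau_stopping
  F_meas := fun n => (H.F_meas n).const_mul c
  F_bdd := by
    intro n
    obtain ⟨C, hC⟩ := H.F_bdd n
    exact ⟨|c| * C, fun ω => by rw [abs_mul]; exact mul_le_mul_of_nonneg_left (hC ω) (abs_nonneg c)⟩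

lemma capital_smulS (c : ℝ) (H : SimpleStrategy) (t : ℝ) (ω : PathSpace) :
    capital (smulS c H) t ω = c * capital H t ω := by
  unfold capital smulS
  simp only [mul_assoc]
  exact tsum_mul_left

/-- Iterated merge of the strategies `Hs 0, …, Hs j`. -/
def foldMerge (Hs : ℕ → SimpleStrategy) : ℕ → SimpleStrategy
  | 0 => Hs 0
  | j + 1 => merge (foldMerge Hs j) (Hs (j + 1))

lemma capital_foldMerge (Hs : ℕ → SimpleStrategy) (j : ℕ) (t : ℝ) (ω : PathSpace) :
    capital (foldMerge Hs j) t ω = ∑ k ∈ Finset.range (j + 1), capital (Hs k) t ω := by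
  induction j with
  | zero => simp [foldMerge]
  | succ j ih =>
    show capital (merge (foldMerge Hs j) (Hs (j + 1))) t ω = _
    rw [capital_merge, ih, Finset.sum_range_succ (n := j + 1), Finset.sum_range_succ (n := j)]

end SimpleStrategy


/-- **Arbitrage characterization of null sets**: `A ⊆ Ω^qv` is a null set (`P̄(A) = 0`)
if and only if there is a sequence of `1`-admissible simple strategies whose iterated
inferior limit capital is nonnegative minus one everywhere on `Ω^qv` and equals `+∞`
on `A`. -/
theorem null_iff_arbitrage (A : Set PathSpace) (hA : A ⊆ OmegaQV) :
    Pbar A = 0 ↔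
      ∃ H : ℕ → SimpleStrategy,
        (∀ n (ω : PathSpace) (t : ℝ), ω ∈ OmegaQV → 0 ≤ t → -1 ≤ capital (H n) t ω) ∧
        ∀ ω ∈ OmegaQV,
          (if ω ∈ A then (⊤ : EReal) else 0) ≤
            1 + liminf (fun t : ℝ =>
              liminf (fun n : ℕ => ((capital (H n) t ω : ℝ) : EReal)) atTop) atTop := by
  constructor
  · intro h0
    have hex : ∀ k : ℕ, ∃ (lam : ℝ) (Hs : ℕ → SimpleStrategy),
        0 < lam ∧ lam < (1 / 2 : ℝ) ^ (k + 1) ∧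
        (∀ n (ω : PathSpace) (t : ℝ), ω ∈ OmegaQV → 0 ≤ t → -lam ≤ capital (Hs n) t ω) ∧
        (∀ ω ∈ OmegaQV, (A.indicator (fun _ => (1 : EReal))) ω ≤
          liminf (fun t : ℝ =>
            liminf (fun n : ℕ => ((lam + capital (Hs n) t ω : ℝ) : EReal)) atTop) atTop) := by
      intro k
      have hδ : (0 : ℝ≥0∞) < ENNReal.ofReal ((1 / 2 : ℝ) ^ (k + 1)) := by
        rw [ENNReal.ofReal_pos]; positivity
      have hlt : Pbar A < ENNReal.ofReal ((1 / 2 : ℝ) ^ (k + 1)) := by rw [h0]; exact hδ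
      rw [Pbar, Ebar] at hlt
      obtain ⟨l, hlS, hllt⟩ := sInf_lt_iff.1 hlt
      obtain ⟨lam, hpos, rfl, Hs, hadm', hsup'⟩ := hlS
      refine ⟨lam, Hs, hpos, ?_, hadm', hsup'⟩
      rwa [ENNReal.ofReal_lt_ofReal_iff (by positivity)] at hllt
    choose lam Hs hpos hlt hadm' hsup' using hex
    set J : ℕ → SimpleStrategy := fun j => SimpleStrategy.foldMerge (fun k => Hs k j) j with hJ
    have hcapJ : ∀ j t (ω : PathSpace),
        capital (J j) t ω = ∑ k ∈ Finset.range (j + 1), capital (Hs k j) t ω :=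
      fun j t ω => SimpleStrategy.capital_foldMerge _ j t ω
    have hlamle : ∀ k, lam k ≤ 1 / 2 := by
      intro k
      refine (hlt k).le.trans ?_
      calc (1 / 2 : ℝ) ^ (k + 1) ≤ (1 / 2 : ℝ) ^ 1 :=
            pow_le_pow_of_le_one (by norm_num) (by norm_num) (by omega)
        _ = 1 / 2 := pow_one _
    have hlamsum : ∀ m : ℕ, ∑ k ∈ Finset.range m, lam k ≤ 1 := by
      intro m
      have h1 : ∑ k ∈ Finset.range m, lam k ≤ ∑ k ∈ Finset.range m, (1 / 2 : ℝ) ^ (k + 1) :=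
        Finset.sum_le_sum fun k _ => (hlt k).le
      have h2 : ∑ k ∈ Finset.range m, (1 / 2 : ℝ) ^ (k + 1)
          = (1 / 2) * ∑ k ∈ Finset.range m, (1 / 2 : ℝ) ^ k := by
        rw [Finset.mul_sum]
        exact Finset.sum_congr rfl fun k _ => by ring
      have h3 := sum_geometric_two_le m
      linarith
    have hadmJ : ∀ j (ω : PathSpace) t, ω ∈ OmegaQV → 0 ≤ t → -1 ≤ capital (J j) t ω := by
      intro j ω t hω ht
      rw [hcapJ]
      have h1 : ∑ k ∈ Finset.range (j + 1), (-(lam k))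
          ≤ ∑ k ∈ Finset.range (j + 1), capital (Hs k j) t ω :=
        Finset.sum_le_sum fun k _ => hadm' k j ω t hω ht
      rw [Finset.sum_neg_distrib] at h1
      have := hlamsum (j + 1)
      linarith
    refine ⟨J, fun j ω t hω ht => hadmJ j ω t hω ht, ?_⟩
    intro ω hω
    by_cases hmem : ω ∈ A
    · rw [if_pos hmem]
      set LJ := liminf (fun t : ℝ =>
        liminf (fun n : ℕ => ((capital (J n) t ω : ℝ) : EReal)) atTop) atTop with hLJ
      have hbound : ∀ m : ℕ, ((((m : ℝ) + 1) / 4 - 1 : ℝ) : EReal) ≤ LJ := by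
        intro m
        have hev_k : ∀ k, ∀ᶠ t in atTop, ((3 / 4 : ℝ) : EReal)
            < liminf (fun n : ℕ =>
                ((lam k + capital (Hs k n) t ω : ℝ) : EReal)) atTop := by
          intro k
          refine eventually_lt_of_lt_liminf ?_ (by isBoundedDefault)
          have h1 := hsup' k ω hω
          rw [Set.indicator_of_mem hmem] at h1
          refine lt_of_lt_of_le ?_ h1
          rw [show (1 : EReal) = ((1 : ℝ) : EReal) by norm_cast, EReal.coe_lt_coe_iff]
          norm_num
        refine le_liminf_of_le (by isBoundedDefault) ?_
        filter_upwards [eventually_ge_atTop (0 : ℝ),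
          (eventually_all_finset (Finset.range (m + 1))).2 fun k _ => hev_k k]
          with t ht0 htk
        refine le_liminf_of_le (by isBoundedDefault) ?_
        have hev_n : ∀ᶠ n in atTop, ∀ k ∈ Finset.range (m + 1),
            ((3 / 4 : ℝ) : EReal) < ((lam k + capital (Hs k n) t ω : ℝ) : EReal) :=
          (eventually_all_finset _).2 fun k hk =>
            eventually_lt_of_lt_liminf (htk k hk) (by isBoundedDefault)
        filter_upwards [hev_n, eventually_ge_atTop m] with n hn hnm
        rw [EReal.coe_le_coe_iff, hcapJ]
        have hsplit : ∑ k ∈ Finset.range (m + 1), capital (Hs k n) t ω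
            + ∑ k ∈ Finset.Ico (m + 1) (n + 1), capital (Hs k n) t ω
            = ∑ k ∈ Finset.range (n + 1), capital (Hs k n) t ω := by
          rw [Finset.range_eq_Ico, Finset.range_eq_Ico]
          exact Finset.sum_Ico_consecutive (fun k => capital (Hs k n) t ω) (Nat.zero_le (m + 1)) (by omega : m + 1 ≤ n + 1)
        have h1 : ((m : ℝ) + 1) * (1 / 4) ≤ ∑ k ∈ Finset.range (m + 1),
            capital (Hs k n) t ω := by
          have hterm : ∀ k ∈ Finset.range (m + 1), (1 / 4 : ℝ) ≤ capital (Hs k n) t ω := by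
            intro k hk
            have h2 := hn k hk
            rw [EReal.coe_lt_coe_iff] at h2
            have h3 := hlamle k
            linarith
          calc ((m : ℝ) + 1) * (1 / 4) = ∑ _k ∈ Finset.range (m + 1), (1 / 4 : ℝ) := by
                rw [Finset.sum_const, Finset.card_range]; push_cast; ring
            _ ≤ _ := Finset.sum_le_sum hterm
        have h2 : (-1 : ℝ) ≤ ∑ k ∈ Finset.Ico (m + 1) (n + 1), capital (Hs k n) t ω := by
          have hterm : ∑ k ∈ Finset.Ico (m + 1) (n + 1), (-(lam k))
              ≤ ∑ k ∈ Finset.Ico (m + 1) (n + 1), capital (Hs k n) t ω :=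
            Finset.sum_le_sum fun k _ => hadm' k n ω t hω ht0
          rw [Finset.sum_neg_distrib] at hterm
          have hsub : ∑ k ∈ Finset.Ico (m + 1) (n + 1), lam k
              ≤ ∑ k ∈ Finset.range (n + 1), lam k := by
            refine Finset.sum_le_sum_of_subset_of_nonneg ?_ fun k _ _ => (hpos k).le
            rw [Finset.range_eq_Ico]
            exact Finset.Ico_subset_Ico (Nat.zero_le _) le_rfl
          have := hlamsum (n + 1)
          linarith
        linarith
      have hLJtop : LJ = ⊤ := by
        rw [EReal.eq_top_iff_forall_lt]
        intro M
        obtain ⟨m, hm⟩ : ∃ m : ℕ, M < ((m : ℝ) + 1) / 4 - 1 := by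
          obtain ⟨m, hm⟩ := exists_nat_gt (4 * (M + 1))
          exact ⟨m, by linarith⟩
        exact lt_of_lt_of_le (EReal.coe_lt_coe_iff.2 hm) (hbound m)
      rw [hLJtop, show (1 : EReal) = ((1 : ℝ) : EReal) by norm_cast, EReal.coe_add_top]
    · rw [if_neg hmem]
      have hLJ : ((-1 : ℝ) : EReal) ≤ liminf (fun t : ℝ =>
          liminf (fun n : ℕ => ((capital (J n) t ω : ℝ) : EReal)) atTop) atTop := by
        refine le_liminf_of_le (by isBoundedDefault) ?_
        filter_upwards [eventually_ge_atTop (0 : ℝ)] with t ht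
        refine le_liminf_of_le (by isBoundedDefault) ?_
        refine Filter.Eventually.of_forall fun n => ?_
        exact EReal.coe_le_coe_iff.2 (hadmJ n ω t hω ht)
      calc (0 : EReal) = 1 + ((-1 : ℝ) : EReal) := by
            rw [show (1 : EReal) = ((1 : ℝ) : EReal) by norm_cast, ← EReal.coe_add]
            norm_num
        _ ≤ _ := add_le_add le_rfl hLJ
  · rintro ⟨H, hadm, hsup⟩
    refine le_antisymm ?_ zero_le
    refine ENNReal.le_of_forall_pos_le_add fun ε hε _ => ?_
    rw [zero_add]
    have hε' : (0 : ℝ) < (ε : ℝ) := by exact_mod_cast hε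
    have key : Pbar A ≤ ENNReal.ofReal (ε : ℝ) := by
      apply sInf_le
      refine ⟨(ε : ℝ), hε', rfl, fun n => SimpleStrategy.smulS (ε : ℝ) (H n), ?_, ?_⟩
      · intro n ω t hω ht
        rw [SimpleStrategy.capital_smulS]
        have h1 := hadm n ω t hω ht
        nlinarith
      · intro ω hω
        by_cases hmem : ω ∈ A
        · have hsup' := hsup ω hω
          rw [if_pos hmem] at hsup'
          set L := liminf (fun t : ℝ =>
            liminf (fun n : ℕ => ((capital (H n) t ω : ℝ) : EReal)) atTop) atTop with hL
          have hLtop : L = ⊤ := by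
            by_contra hne
            have h1 : (1 : EReal) + L < ⊤ := EReal.add_lt_top (by exact_mod_cast EReal.coe_ne_top 1) hne
            rw [top_le_iff.1 hsup'] at h1
            exact lt_irrefl _ h1
          rw [Set.indicator_of_mem hmem]
          have hMle : ∀ᶠ t in atTop, ((1 / (ε : ℝ) : ℝ) : EReal)
              < liminf (fun n : ℕ => ((capital (H n) t ω : ℝ) : EReal)) atTop := by
            refine eventually_lt_of_lt_liminf ?_ (by isBoundedDefault)
            rw [← hL, hLtop]
            exact EReal.coe_lt_top _
          refine le_liminf_of_le (by isBoundedDefault) ?_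
          filter_upwards [hMle] with t ht
          have hn := eventually_lt_of_lt_liminf ht
          refine le_liminf_of_le (by isBoundedDefault) ?_
          filter_upwards [hn] with n hn'
          rw [EReal.coe_lt_coe_iff] at hn'
          rw [SimpleStrategy.capital_smulS]
          have h2 : ε * (1 / (ε : ℝ)) = 1 := by field_simp
          have h3 : (1 : ℝ) ≤ (ε : ℝ) + (ε : ℝ) * capital (H n) t ω := by
            nlinarith [mul_le_mul_of_nonneg_left hn'.le hε'.le]
          exact_mod_cast h3
        · rw [Set.indicator_of_notMem hmem]
          refine le_liminf_of_le (by isBoundedDefault) ?_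
          filter_upwards [eventually_ge_atTop (0 : ℝ)] with t ht
          refine le_liminf_of_le (by isBoundedDefault) ?_
          refine Filter.Eventually.of_forall fun n => ?_
          rw [SimpleStrategy.capital_smulS]
          have h1 := hadm n ω t hω ht
          have h3 : (0 : ℝ) ≤ (ε : ℝ) + (ε : ℝ) * capital (H n) t ω := by nlinarith
          exact_mod_cast h3
    calc Pbar A ≤ ENNReal.ofReal (ε : ℝ) := key
      _ = (ε : ℝ≥0∞) := ENNReal.ofReal_coe_nnreal

end RF
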